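/- arXiv:1206.0646 — 3 statements merged into one kernel-verified Lean document; each statement's English description precedes it below -/
import Mathlib

section
/- The scalar boundary matrix K(λ;ζ,κ,τ) = (1/sinh ζ)·[[sinh(λ+ζ), κ e^τ sinh 2λ],[κ e^{−τ} sinh 2λ, sinh(ζ−λ)]] satisfies the reflection equation R₁₂(λ−μ) K₁(λ) R₁₂(λ+μ) K₂(μ) = K₂(μ) R₁₂(λ+μ) K₁(λ) R₁₂(λ−μ), where R is the 6-vertex trigonometric R-matrix. -/
/-! Put `x = e^λ`, `y = e^μ`, `q = e^η`, `z = e^ζ`, `t = e^τ`. Clearing the denominators of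
`sinh u = (e^u - e^{-u}) / 2`, each of the four factors of the reflection equation becomes a scalar
multiple of a matrix with polynomial entries in `x, y, q, z, t, κ`. Both sides are multilinear in
the four factors, so the scalars cancel and what remains is a polynomial identity, valid over any
commutative ring and checked entry by entry. -/

open Complex Matrix Kronecker

noncomputable section

/-- The 6-vertex trigonometric R-matrix on ℂ² ⊗ ℂ². -/
def Rmat (η lam : ℂ) : Matrix (Fin 2 × Fin 2) (Fin 2 × Fin 2) ℂ :=
  Matrix.of fun p q =>
    if p = q then (if p.1 = p.2 then Complex.sinh (lam + η) else Complex.sinh lam)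
    else if p.1 = q.2 ∧ p.2 = q.1 then Complex.sinh η else 0

/-- The general non-diagonal scalar boundary matrix K(λ;ζ,κ,τ). -/
def Kmat (ζ κ τ lam : ℂ) : Matrix (Fin 2) (Fin 2) ℂ :=
  (Complex.sinh ζ)⁻¹ •
    !![Complex.sinh (lam + ζ), κ * Complex.exp τ * Complex.sinh (2 * lam);
       κ * Complex.exp (-τ) * Complex.sinh (2 * lam), Complex.sinh (ζ - lam)]

section General

variable {R : Type*} [CommRing R] {n : Type*} [Fintype n] [DecidableEq n]

def sixVertexMatrix (a b c : R) : Matrix (Fin 2 × Fin 2) (Fin 2 × Fin 2) R :=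
  Matrix.of fun p q =>
    if p = q then (if p.1 = p.2 then a else b)
    else if p.1 = q.2 ∧ p.2 = q.1 then c else 0

theorem smul_sixVertexMatrix (s a b c : R) :
    s • sixVertexMatrix a b c = sixVertexMatrix (s * a) (s * b) (s * c) := by
  ext p q
  simp only [sixVertexMatrix, Matrix.smul_apply, of_apply, smul_eq_mul, mul_ite, mul_zero]

def ReflectionEquation (A B : Matrix (n × n) (n × n) R) (K L : Matrix n n R) : Prop :=
  A * (K ⊗ₖ (1 : Matrix n n R)) * B * ((1 : Matrix n n R) ⊗ₖ L) =
    ((1 : Matrix n n R) ⊗ₖ L) * B * (K ⊗ₖ (1 : Matrix n n R)) * A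

theorem ReflectionEquation.smul {A B : Matrix (n × n) (n × n) R} {K L : Matrix n n R}
    (h : ReflectionEquation A B K L) (a b c d : R) :
    ReflectionEquation (a • A) (b • B) (c • K) (d • L) := by
  unfold ReflectionEquation at *
  simp only [smul_kronecker, kronecker_smul, Matrix.smul_mul, Matrix.mul_smul, smul_smul, h]
  congr 1
  ring

def boundaryMatrixPoly (x z t κ : R) : Matrix (Fin 2) (Fin 2) R :=
  !![x * t * (x ^ 2 * z ^ 2 - 1), κ * t ^ 2 * z * (x ^ 4 - 1);
     κ * z * (x ^ 4 - 1), x * t * (z ^ 2 - x ^ 2)]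

theorem reflectionEquation_boundaryMatrixPoly (x y q z t κ : R) :
    ReflectionEquation
      (sixVertexMatrix (x ^ 2 * q ^ 2 - y ^ 2) (q * (x ^ 2 - y ^ 2)) (x * y * (q ^ 2 - 1)))
      (sixVertexMatrix (x ^ 2 * y ^ 2 * q ^ 2 - 1) (q * (x ^ 2 * y ^ 2 - 1)) (x * y * (q ^ 2 - 1)))
      (boundaryMatrixPoly x z t κ) (boundaryMatrixPoly y z t κ) := by
  unfold ReflectionEquation
  ext ⟨i, j⟩ ⟨m, l⟩
  fin_cases i <;> fin_cases j <;> fin_cases m <;> fin_cases l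
  all_goals simp only [sixVertexMatrix, boundaryMatrixPoly, Prod.ext_iff, Fin.zero_eta, Fin.isValue,
    Fin.mk_one, Matrix.mul_apply, of_apply, reduceIte, kroneckerMap_apply, cons_val', cons_val_zero,
    cons_val_one, cons_val_fin_one, Matrix.one_apply, mul_ite, ite_mul, mul_one, mul_zero, one_mul,
    zero_mul, add_zero, zero_add, Fintype.sum_prod_type, Fin.sum_univ_two, Finset.sum_ite_eq',
    Finset.sum_ite_irrel, Finset.sum_const_zero, Finset.mem_univ, true_and, and_true, false_and,
    and_false, zero_ne_one, one_ne_zero, ite_self]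
  all_goals ring

end General

theorem Rmat_eq_sixVertexMatrix (η u : ℂ) :
    Rmat η u = sixVertexMatrix (sinh (u + η)) (sinh u) (sinh η) := rfl

theorem Rmat_sub_eq_smul (η lam mu : ℂ) :
    Rmat η (lam - mu) = (2 * exp (lam + mu + η))⁻¹ •
      sixVertexMatrix (exp lam ^ 2 * exp η ^ 2 - exp mu ^ 2) (exp η * (exp lam ^ 2 - exp mu ^ 2))
        (exp lam * exp mu * (exp η ^ 2 - 1)) := by
  rw [Rmat_eq_sixVertexMatrix, smul_sixVertexMatrix]
  congr 1 <;> simp only [Complex.sinh, exp_add, exp_sub, exp_neg] <;> field_simp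

theorem Rmat_add_eq_smul (η lam mu : ℂ) :
    Rmat η (lam + mu) = (2 * exp (lam + mu + η))⁻¹ •
      sixVertexMatrix (exp lam ^ 2 * exp mu ^ 2 * exp η ^ 2 - 1)
        (exp η * (exp lam ^ 2 * exp mu ^ 2 - 1)) (exp lam * exp mu * (exp η ^ 2 - 1)) := by
  rw [Rmat_eq_sixVertexMatrix, smul_sixVertexMatrix]
  congr 1 <;> simp only [Complex.sinh, exp_add, exp_neg] <;> field_simp

theorem Kmat_eq_smul (ζ κ τ lam : ℂ) :
    Kmat ζ κ τ lam = ((sinh ζ)⁻¹ * (2 * exp (2 * lam + ζ + τ))⁻¹) •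
      boundaryMatrixPoly (exp lam) (exp ζ) (exp τ) κ := by
  rw [Kmat, mul_smul]
  congr 1
  ext i j
  fin_cases i <;> fin_cases j <;>
    simp only [Complex.sinh, exp_add, neg_add_rev, exp_neg, two_mul, exp_sub, neg_sub,
      Fin.zero_eta, Fin.mk_one, Fin.isValue, of_apply, cons_val', cons_val_zero, cons_val_one,
      cons_val_fin_one, boundaryMatrixPoly, Matrix.smul_apply, smul_eq_mul] <;> field_simp <;> ring

theorem reflection_equation_Kmat_general (η ζ κ τ lam mu : ℂ) :
    Rmat η (lam - mu) * (Kmat ζ κ τ lam ⊗ₖ (1 : Matrix (Fin 2) (Fin 2) ℂ)) *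
        Rmat η (lam + mu) * ((1 : Matrix (Fin 2) (Fin 2) ℂ) ⊗ₖ Kmat ζ κ τ mu) =
      ((1 : Matrix (Fin 2) (Fin 2) ℂ) ⊗ₖ Kmat ζ κ τ mu) * Rmat η (lam + mu) *
        (Kmat ζ κ τ lam ⊗ₖ (1 : Matrix (Fin 2) (Fin 2) ℂ)) * Rmat η (lam - mu) := by
  rw [Rmat_sub_eq_smul, Rmat_add_eq_smul, Kmat_eq_smul, Kmat_eq_smul]
  exact (reflectionEquation_boundaryMatrixPoly _ _ _ _ _ κ).smul _ _ _ _

/-- The scalar boundary matrix K(λ;ζ,κ,τ) satisfies the reflection equation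
R₁₂(λ−μ) K₁(λ) R₁₂(λ+μ) K₂(μ) = K₂(μ) R₁₂(λ+μ) K₁(λ) R₁₂(λ−μ). -/
theorem reflection_equation_Kmat (η ζ κ τ lam mu : ℂ) (hζ : Complex.sinh ζ ≠ 0) :
    Rmat η (lam - mu) * (Kmat ζ κ τ lam ⊗ₖ (1 : Matrix (Fin 2) (Fin 2) ℂ)) *
        Rmat η (lam + mu) * ((1 : Matrix (Fin 2) (Fin 2) ℂ) ⊗ₖ Kmat ζ κ τ mu) =
      ((1 : Matrix (Fin 2) (Fin 2) ℂ) ⊗ₖ Kmat ζ κ τ mu) * Rmat η (lam + mu) *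
        (Kmat ζ κ τ lam ⊗ₖ (1 : Matrix (Fin 2) (Fin 2) ℂ)) * Rmat η (lam - mu) :=
  reflection_equation_Kmat_general η ζ κ τ lam mu

end
end

section
/- Suppose a covector ⟨α| and a vector |β⟩ admit separate (factorized) decompositions over a basis indexed by h = (h₁,…,h_N) ∈ {0,1}^N with pairing ⟨h|h'⟩ = δ_{h,h'} · ∏_{b<a} 1/(η_a^{(h_a)} − η_b^{(h_b)}), namely ⟨α| = Σ_h ∏ₐ αₐ(hₐ) · ∏_{b<a}(η_a^{(h_a)} − η_b^{(h_b)}) ⟨h| and |β⟩ = Σ_h ∏ₐ βₐ(hₐ) · ∏_{b<a}(η_a^{(h_a)} − η_b^{(h_b)}) |h⟩. Then ⟨α|β⟩ = det_N M where M_{a,b} = Σ_{h=0}^{1} αₐ(h) βₐ(h) (η_a^{(h)})^{b−1}. -/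
open Complex Matrix Finset

lemma prod_Ioi_eq_prod_Iio (n : ℕ) (f : Fin n → Fin n → ℂ) :
    ∏ i, ∏ j ∈ Finset.Ioi i, f i j = ∏ j, ∏ i ∈ Finset.Iio j, f i j := by
  apply Finset.prod_comm'
  intro x y
  simp [Finset.mem_Ioi, Finset.mem_Iio, and_comm]

/-- Scalar products of separate states in the SOV basis:
⟨α|β⟩ = Σ_{h∈{0,1}^N} ∏ₐ αₐ(hₐ)βₐ(hₐ) · V(η₁^{(h₁)},…,η_N^{(h_N)}) = det_N M with
M_{a,b} = Σ_{h=0,1} αₐ(h)βₐ(h)(ηₐ^{(h)})^{b−1}. -/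
theorem separate_states_scalar_product (N : ℕ) (ηv α β : Fin N → Fin 2 → ℂ) :
    ∑ h : Fin N → Fin 2,
        (∏ a : Fin N, α a (h a) * β a (h a)) *
          ∏ a : Fin N, ∏ b ∈ Finset.Iio a, (ηv a (h a) - ηv b (h b)) =
      Matrix.det (Matrix.of fun a b : Fin N =>
        ∑ h : Fin 2, α a h * β a h * (ηv a h) ^ (b : ℕ)) := by
  classical
  have hdet :
      Matrix.det (Matrix.of fun a b : Fin N =>
        ∑ h : Fin 2, α a h * β a h * (ηv a h) ^ (b : ℕ))
      = ∑ h : Fin N → Fin 2,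
          Matrix.det (Matrix.of fun a b : Fin N =>
            α a (h a) * β a (h a) * (ηv a (h a)) ^ (b : ℕ)) := by
    have e : ∀ M : Matrix (Fin N) (Fin N) ℂ, M.det = Matrix.detRowAlternating M :=
      fun _ => rfl
    have h1 : (Matrix.of fun a b : Fin N => ∑ h : Fin 2, α a h * β a h * (ηv a h) ^ (b : ℕ))
        = fun a => ∑ h : Fin 2, (fun b : Fin N => α a h * β a h * (ηv a h) ^ (b : ℕ)) := by
      ext a b
      simp
    rw [e, h1]
    exact ((Matrix.detRowAlternating (n := Fin N) (R := ℂ)).toMultilinearMap.map_sum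
        (g := fun (a : Fin N) (h : Fin 2) =>
          fun b : Fin N => α a h * β a h * (ηv a h) ^ (b : ℕ))).trans
      (Finset.sum_congr rfl fun h _ => rfl)
  rw [hdet]
  apply Finset.sum_congr rfl
  intro h _
  have hrow : (Matrix.of fun a b : Fin N =>
      α a (h a) * β a (h a) * (ηv a (h a)) ^ (b : ℕ))
      = Matrix.of fun a b : Fin N =>
        (fun a => α a (h a) * β a (h a)) a *
          (Matrix.vandermonde (fun a => ηv a (h a))) a b := by
    ext a b
    simp [Matrix.vandermonde]
  rw [hrow, Matrix.det_mul_column, Matrix.det_vandermonde]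
  congr 1
  rw [prod_Ioi_eq_prod_Iio]
end

section
/- Let Q, Q̄ : {0,1} → ℂ (for each a = 1,…,N) and let τ, τ' be complex-valued functions satisfying, for each a and h ∈ {0,1}, the two-term homogeneous relations of Theorem 5.1: τ(ζ_a^{(0)})Q(0)−A(−ζ_a^{(0)})Q(1)=0, τ(ζ_a^{(1)})Q(1)−A(ζ_a^{(1)})Q(0)=0 for the primed data, and analogously for the barred data with appropriately gauged coefficients. If τ ≠ τ' on the relevant nodes and both satisfy the separate structure, then Σ_{b=1}^{N} M_{a,b}^{(τ,τ')} c_b^{(τ,τ')} = 0 for all a, where M_{a,b}^{(τ,τ')} = Σ_{h=0}^{1} Q̄_τ(ζ_a^{(h)}) Q_{τ'}(ζ_a^{(h)}) (η_a^{(h)})^{b−1} and the c_b are the coefficients in the expansion τ(λ)−τ'(λ) = sinh(2λ−η)sinh(2λ+η) Σ_b c_b (cosh 2λ)^{b−1}; consequently det_N M^{(τ,τ')} = 0 whenever τ ≠ τ', i.e. eigencovectors and eigenvectors for distinct transfer-matrix eigenvalues are orthogonal. -/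
open Complex Matrix Finset

/-- Orthogonality of transfer matrix eigenstates for distinct eigenvalues, in SOV form.
Given the separate nodes ζ_a^{(h)} = ξ_a + (h−1/2)η, Q-functions satisfying the
discrete Baxter relations, the fusion conditions, and the expansion
τ(λ)−τ'(λ) = sinh(2λ−η)sinh(2λ+η) Σ_b c_b (cosh 2λ)^{b−1}, one has
Σ_b M_{a,b}^{(τ,τ')} c_b = 0 for all a, and det M^{(τ,τ')} = 0 whenever τ ≠ τ'. -/
theorem sov_eigenstates_orthogonality (N : ℕ) (η : ℂ) (ξ : Fin N → ℂ)
    (ζ : Fin N → Fin 2 → ℂ)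
    (hζ : ∀ a h, ζ a h = ξ a + (((h : Fin 2).val : ℂ) - 1 / 2) * η)
    (A : ℂ → ℂ) (τ τ' : ℂ → ℂ) (Q Qbar : Fin N → Fin 2 → ℂ)
    (kα : Fin N → ℂ) (c : Fin N → ℂ)
    (hA0 : ∀ a, A (ζ a 0) = 0) (hA1 : ∀ a, A (-ζ a 1) = 0)
    (hA0' : ∀ a, A (-ζ a 0) ≠ 0) (hA1' : ∀ a, A (ζ a 1) ≠ 0)
    (hS : ∀ a (h : Fin 2),
      Complex.sinh (2 * ζ a h - η) ≠ 0 ∧ Complex.sinh (2 * ζ a h + η) ≠ 0)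
    (hfus : ∀ a, τ (ζ a 0) * τ (ζ a 1) = A (ζ a 1) * A (-ζ a 0))
    (hfus' : ∀ a, τ' (ζ a 0) * τ' (ζ a 1) = A (ζ a 1) * A (-ζ a 0))
    (hQ : ∀ a, Q a 1 * A (-ζ a 0) = τ' (ζ a 0) * Q a 0)
    (hQbar : ∀ a, Qbar a 1 * A (ζ a 1) = kα a * τ (ζ a 0) * Qbar a 0)
    (hkα : ∀ a, kα a * (Complex.sinh (2 * ζ a 0 - η) * Complex.sinh (2 * ζ a 0 + η)) =
      Complex.sinh (2 * ζ a 1 - η) * Complex.sinh (2 * ζ a 1 + η))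
    (hexp : ∀ lam : ℂ, τ lam - τ' lam =
      Complex.sinh (2 * lam - η) * Complex.sinh (2 * lam + η) *
        ∑ b : Fin N, c b * (Complex.cosh (2 * lam)) ^ (b : ℕ)) :
    (∀ a : Fin N,
        ∑ b : Fin N,
          (∑ h : Fin 2, Qbar a h * Q a h * (Complex.cosh (2 * ζ a h)) ^ (b : ℕ)) * c b = 0) ∧
    ((∃ lam : ℂ, τ lam ≠ τ' lam) →
      Matrix.det (Matrix.of fun a b : Fin N =>
        ∑ h : Fin 2, Qbar a h * Q a h * (Complex.cosh (2 * ζ a h)) ^ (b : ℕ)) = 0) := by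
  have key : ∀ a : Fin N,
      ∑ b : Fin N,
        (∑ h : Fin 2, Qbar a h * Q a h * (Complex.cosh (2 * ζ a h)) ^ (b : ℕ)) * c b = 0 := by
    intro a
    have hP : ∀ h : Fin 2, τ (ζ a h) - τ' (ζ a h) =
        (Complex.sinh (2 * ζ a h - η) * Complex.sinh (2 * ζ a h + η)) *
          ∑ b : Fin N, c b * (Complex.cosh (2 * ζ a h)) ^ (b : ℕ) := by
      intro h
      simpa [mul_assoc] using hexp (ζ a h)
    have hswap : ∑ b : Fin N,
        (∑ h : Fin 2, Qbar a h * Q a h * (Complex.cosh (2 * ζ a h)) ^ (b : ℕ)) * c b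
        = ∑ h : Fin 2, Qbar a h * Q a h *
            ∑ b : Fin N, c b * (Complex.cosh (2 * ζ a h)) ^ (b : ℕ) := by
      simp only [Finset.sum_mul, Finset.mul_sum]
      rw [Finset.sum_comm]
      exact Finset.sum_congr rfl fun h _ => Finset.sum_congr rfl fun b _ => by ring
    rw [hswap, Fin.sum_univ_two]
    set S0 := Complex.sinh (2 * ζ a 0 - η) * Complex.sinh (2 * ζ a 0 + η) with hS0def
    set S1 := Complex.sinh (2 * ζ a 1 - η) * Complex.sinh (2 * ζ a 1 + η) with hS1def
    set P0 := ∑ b : Fin N, c b * (Complex.cosh (2 * ζ a 0)) ^ (b : ℕ) with hP0def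
    set P1 := ∑ b : Fin N, c b * (Complex.cosh (2 * ζ a 1)) ^ (b : ℕ) with hP1def
    have e0 : τ (ζ a 0) - τ' (ζ a 0) = S0 * P0 := hP 0
    have e1 : τ (ζ a 1) - τ' (ζ a 1) = S1 * P1 := hP 1
    have hk : kα a * S0 = S1 := hkα a
    have hS0ne : S0 ≠ 0 := mul_ne_zero (hS a 0).1 (hS a 0).2
    have hS1ne : S1 ≠ 0 := mul_ne_zero (hS a 1).1 (hS a 1).2
    have H : (Qbar a 0 * Q a 0 * P0 + Qbar a 1 * Q a 1 * P1) *
        (S0 * S1 * A (ζ a 1) * A (-ζ a 0)) = 0 := by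
      linear_combination -(Qbar a 0 * Q a 0 * S1 * A (ζ a 1) * A (-ζ a 0)) * e0 -
        (Qbar a 1 * Q a 1 * S0 * A (ζ a 1) * A (-ζ a 0)) * e1 +
        (S0 * (τ (ζ a 1) - τ' (ζ a 1)) * Q a 1 * A (-ζ a 0)) * hQbar a +
        (S0 * (τ (ζ a 1) - τ' (ζ a 1)) * kα a * τ (ζ a 0) * Qbar a 0) * hQ a +
        ((τ (ζ a 1) - τ' (ζ a 1)) * τ (ζ a 0) * τ' (ζ a 0) * Qbar a 0 * Q a 0) * hk +
        (S1 * Qbar a 0 * Q a 0 * τ' (ζ a 0)) * hfus a -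
        (S1 * Qbar a 0 * Q a 0 * τ (ζ a 0)) * hfus' a
    have hne : S0 * S1 * A (ζ a 1) * A (-ζ a 0) ≠ 0 :=
      mul_ne_zero (mul_ne_zero (mul_ne_zero hS0ne hS1ne) (hA1' a)) (hA0' a)
    exact (mul_eq_zero.mp H).resolve_right hne
  refine ⟨key, fun ⟨lam, hlam⟩ => ?_⟩
  have hcne : c ≠ 0 := by
    intro hc
    apply hlam
    have := hexp lam
    simp [hc] at this
    exact sub_eq_zero.mp this
  rw [← Matrix.exists_mulVec_eq_zero_iff]
  exact ⟨c, hcne, funext fun a => key a⟩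
end
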